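/- arXiv:1305.6124 — 6 statements merged into one kernel-verified Lean document; each statement's English description precedes it below -/
import Mathlib

section
/- Let Φ : ℝ → ℂ be continuous and 1-periodic, and let α ∈ ℝ. Then there exists a continuous 1-periodic function Ψ : ℝ → ℂ such that for all x, the derivative of x ↦ i·Ψ(x)·e^{iαx} equals (1 − e^{iα})·Φ(x)·e^{iαx}. -/
open Complex

/-!
With `c = exp (I * α)`, the function `f x = (1 - c) * Φ x * exp (I * α * x)` satisfies
`f (x + 1) = c * f x`. If `c ≠ 1`, the primitive `∫ t in 0..x, f t` shifted by the constant
`(c - 1)⁻¹ * ∫ t in 0..1, f t` satisfies the same relation, and multiplying it by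
`-I * exp (-(I * α * x))` gives a `1`-periodic `Ψ`. If `c = 1`, the derivative to match is `0`
and `Ψ = 0` works.
-/

section TwistedPeriodic

variable {E : Type*} [NormedAddCommGroup E] [NormedSpace ℂ E] [CompleteSpace E]

theorem exists_hasDerivAt_add_eq_smul {f : ℝ → E} (hf : Continuous f) {T : ℝ} {c : ℂ}
    (hfT : ∀ x, f (x + T) = c • f x) (hc : c ≠ 1) :
    ∃ F : ℝ → E, (∀ x, HasDerivAt F (f x) x) ∧ ∀ x, F (x + T) = c • F x := by
  set F₀ : ℝ → E := fun x => ∫ t in (0 : ℝ)..x, f t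
  have hF₀ : ∀ x, F₀ (x + T) = F₀ T + c • F₀ x := fun x => by
    have hshift : ∫ t in T..x + T, f t = c • F₀ x := by
      simp only [F₀, ← intervalIntegral.integral_smul, ← hfT, zero_add,
        intervalIntegral.integral_comp_add_right]
    rw [← hshift, intervalIntegral.integral_add_adjacent_intervals
      (hf.intervalIntegrable _ _) (hf.intervalIntegrable _ _)]
  have hC : F₀ T + (c - 1)⁻¹ • F₀ T = c • (c - 1)⁻¹ • F₀ T := by
    conv_lhs => arg 1; rw [← one_smul ℂ (F₀ T)]
    rw [smul_smul, ← add_smul]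
    congr 1
    field_simp [sub_ne_zero.mpr hc]
    ring
  refine ⟨fun x => F₀ x + (c - 1)⁻¹ • F₀ T, fun x => ?_, fun x => ?_⟩
  · exact (hf.integral_hasStrictDerivAt 0 x).hasDerivAt.add_const _
  · simp only [hF₀, smul_add, ← hC]
    abel

end TwistedPeriodic

theorem exp_I_mul_add_one (α x : ℝ) :
    exp (I * α * ↑(x + 1)) = exp (I * α) * exp (I * α * x) := by
  rw [← exp_add]
  push_cast
  ring_nf

theorem stmt0 (Φ : ℝ → ℂ) (hΦc : Continuous Φ) (hΦp : ∀ x, Φ (x + 1) = Φ x) (α : ℝ) :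
    ∃ Ψ : ℝ → ℂ, Continuous Ψ ∧ (∀ x, Ψ (x + 1) = Ψ x) ∧
      ∀ x : ℝ, HasDerivAt (fun y : ℝ => Complex.I * Ψ y * Complex.exp (Complex.I * α * y))
        ((1 - Complex.exp (Complex.I * α)) * Φ x * Complex.exp (Complex.I * α * x)) x := by
  by_cases hc : exp (I * α) = 1
  · exact ⟨0, continuous_const, fun _ => rfl, fun x => by simpa [hc] using hasDerivAt_const x 0⟩
  obtain ⟨F, hF, hFp⟩ := exists_hasDerivAt_add_eq_smul
    (f := fun t : ℝ => (1 - exp (I * α)) * Φ t * exp (I * α * t)) (T := 1) (by fun_prop)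
    (fun x => by simp only [hΦp, exp_I_mul_add_one, smul_eq_mul]; ring) hc
  have hFc : Continuous F := continuous_iff_continuousAt.mpr fun x => (hF x).continuousAt
  refine ⟨fun x => -I * F x * exp (-(I * α * x)), by fun_prop, fun x => ?_, fun x => ?_⟩
  · simp only [hFp, smul_eq_mul]
    rw [exp_neg, exp_neg, exp_I_mul_add_one]
    field_simp [exp_ne_zero]
  · refine (hF x).congr_of_eventuallyEq (Filter.Eventually.of_forall fun y => ?_)
    simp only [exp_neg]
    field_simp [exp_ne_zero]
    rw [I_sq]
    ring
end

section
/- Let Φ : ℝ → ℂ be given by a finite Fourier sum Φ(x) = Σ_{n=−N}^{N} c_n · e^{2πinx}, and let α ∈ ℝ with 2πn + α ≠ 0 for all |n| ≤ N. Define Q_α(x) = ∫₀ˣ Φ(t)e^{iαt} dt and Ψ(x) = −i·Q_α(x)·e^{−iαx}·(1 − e^{iα}) + i·Q_α(1)·e^{−iαx}. Then Ψ(x) = Σ_{n=−N}^{N} (−c_n·(1 − e^{iα})/(2πn + α)) · e^{2πinx}. -/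
/-! Multiplying by `e^{iαt}` shifts every frequency `2πn` of `Φ` to `2πn + α ≠ 0`, so `Q_α` integrates
termwise to `Σ c_n (e^{i(2πn+α)x} - 1) / (i(2πn+α))`. Since `e^{i(2πn+α)} = e^{iα}`, the constant terms
cancel in `Ψ`, and the factor `e^{-iαx}` undoes the shift. -/

open Complex

lemma exp_I_mul_two_pi_int_add (n : ℤ) (α x : ℝ) :
    exp (I * ((2 * Real.pi * n + α : ℝ) : ℂ) * x) =
      exp (2 * Real.pi * I * n * x) * exp (I * α * x) := by
  rw [← exp_add]
  push_cast
  ring_nf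

lemma exp_I_mul_two_pi_int_add_one (n : ℤ) (α : ℝ) :
    exp (I * ((2 * Real.pi * n + α : ℝ) : ℂ) * ((1 : ℝ) : ℂ)) = exp (I * α) := by
  rw [exp_I_mul_two_pi_int_add, ofReal_one, mul_one, mul_one,
    show 2 * Real.pi * I * n = n * (2 * Real.pi * I) by ring, exp_int_mul_two_pi_mul_I, one_mul]

lemma integral_exp_I_mul {β : ℝ} (hβ : β ≠ 0) (x : ℝ) :
    ∫ t in (0 : ℝ)..x, exp (I * β * t) = (exp (I * β * x) - 1) / (I * β) := by
  rw [integral_exp_mul_complex (mul_ne_zero I_ne_zero (ofReal_ne_zero.mpr hβ))]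
  simp

lemma integral_fourierSum_mul_exp (s : Finset ℤ) (c : ℤ → ℂ) {α : ℝ}
    (hα : ∀ n ∈ s, 2 * Real.pi * n + α ≠ 0) (x : ℝ) :
    ∫ t in (0 : ℝ)..x, (∑ n ∈ s, c n * exp (2 * Real.pi * I * n * t)) * exp (I * α * t) =
      ∑ n ∈ s, c n * ((exp (I * ((2 * Real.pi * n + α : ℝ) : ℂ) * x) - 1) /
        (I * ((2 * Real.pi * n + α : ℝ) : ℂ))) := by
  have hshift : ∀ t : ℝ, (∑ n ∈ s, c n * exp (2 * Real.pi * I * n * t)) * exp (I * α * t) =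
      ∑ n ∈ s, c n * exp (I * ((2 * Real.pi * n + α : ℝ) : ℂ) * t) := fun t => by
    rw [Finset.sum_mul]
    exact Finset.sum_congr rfl fun n _ => by rw [mul_assoc, exp_I_mul_two_pi_int_add]
  simp_rw [hshift]
  rw [intervalIntegral.integral_finsetSum fun n _ =>
    (by fun_prop : Continuous _).intervalIntegrable _ _]
  refine Finset.sum_congr rfl fun n hn => ?_
  rw [intervalIntegral.integral_const_mul, integral_exp_I_mul (hα n hn)]

theorem stmt7 (N : ℕ) (c : ℤ → ℂ) (α : ℝ)
    (hα : ∀ n : ℤ, |n| ≤ (N : ℤ) → 2 * Real.pi * n + α ≠ 0)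
    (Φ : ℝ → ℂ)
    (hΦ : ∀ x : ℝ, Φ x = ∑ n ∈ Finset.Icc (-(N:ℤ)) (N:ℤ),
      c n * Complex.exp (2 * Real.pi * Complex.I * n * x))
    (Q : ℝ → ℂ) (hQ : ∀ x : ℝ, Q x = ∫ t in (0:ℝ)..x, Φ t * Complex.exp (Complex.I * α * t))
    (Ψ : ℝ → ℂ)
    (hΨ : ∀ x : ℝ, Ψ x = -Complex.I * Q x * Complex.exp (-(Complex.I * α * x)) *
        (1 - Complex.exp (Complex.I * α)) + Complex.I * Q 1 * Complex.exp (-(Complex.I * α * x))) :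
    ∀ x : ℝ, Ψ x = ∑ n ∈ Finset.Icc (-(N:ℤ)) (N:ℤ),
      (-(c n * (1 - Complex.exp (Complex.I * α)) / ((2 * Real.pi * n + α : ℝ) : ℂ))) *
        Complex.exp (2 * Real.pi * Complex.I * n * x) := by
  intro x
  have hfreq : ∀ n ∈ Finset.Icc (-(N:ℤ)) N, 2 * Real.pi * n + α ≠ 0 := fun n hn =>
    hα n (abs_le.mpr (Finset.mem_Icc.mp hn))
  simp only [hΨ, hQ, hΦ]
  rw [integral_fourierSum_mul_exp _ c hfreq, integral_fourierSum_mul_exp _ c hfreq,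
    Finset.mul_sum, Finset.sum_mul, Finset.sum_mul, Finset.mul_sum, Finset.sum_mul,
    ← Finset.sum_add_distrib]
  refine Finset.sum_congr rfl fun n hn => ?_
  rw [exp_I_mul_two_pi_int_add, exp_I_mul_two_pi_int_add_one, exp_neg]
  have hβ : ((2 * Real.pi * n + α : ℝ) : ℂ) ≠ 0 := ofReal_ne_zero.mpr (hfreq n hn)
  field_simp
  ring
end

section
/- Let α ∈ ℝ with α ∉ 2πℤ and let C ∈ ℂ be a constant. Then the unique continuous 1-periodic Ψ satisfying (i·Ψ(x)·e^{iαx})' = (1 − e^{iα})·C·e^{iαx} is the constant function Ψ(x) = −C·(1 − e^{iα})/α. -/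
/-!
With `E y = exp (iαy)`, the hypothesis says that `F y = iΨ(y) E(y)` has the same derivative as `c E`,
where `c = (1 - e^{iα}) C / (iα)`; hence `F = c E + K` for a constant `K`. Both `F` (as `Ψ` is periodic)
and `E` get multiplied by `e^{iα}` under `y ↦ y + 1`, so `K = e^{iα} K`, i.e. `K = 0` because
`e^{iα} ≠ 1`. Thus `iΨ = c` is constant.
-/

open Complex

lemma hasDerivAt_cexp_mul_ofReal (z : ℂ) (x : ℝ) :
    HasDerivAt (fun y : ℝ => exp (z * y)) (z * exp (z * x)) x := by
  simpa [mul_comm] using ((hasDerivAt_id (x : ℂ)).const_mul z).cexp.comp_ofReal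

lemma exists_eq_mul_cexp_add_of_hasDerivAt {F : ℝ → ℂ} {z a : ℂ} (hz : z ≠ 0)
    (hF : ∀ x : ℝ, HasDerivAt F (a * exp (z * x)) x) :
    ∃ K : ℂ, ∀ x : ℝ, F x = a / z * exp (z * x) + K := by
  have hG : ∀ x : ℝ, HasDerivAt (fun y : ℝ => F y - a / z * exp (z * y)) 0 x := fun x => by
    have h := (hF x).sub ((hasDerivAt_cexp_mul_ofReal z x).const_mul (a / z))
    rwa [← mul_assoc, div_mul_cancel₀ a hz, sub_self] at h
  refine ⟨F 0 - a / z * exp (z * (0 : ℝ)), fun x => ?_⟩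
  have hconst := is_const_of_deriv_eq_zero (fun y => (hG y).differentiableAt)
    (fun y => (hG y).deriv) x 0
  linear_combination hconst

lemma eq_mul_cexp_of_hasDerivAt_of_add_eq {F : ℝ → ℂ} {z a : ℂ} {T : ℝ}
    (hzT : exp (z * T) ≠ 1) (hF : ∀ x : ℝ, HasDerivAt F (a * exp (z * x)) x)
    (hFT : ∀ x, F (x + T) = exp (z * T) * F x) (x : ℝ) :
    F x = a / z * exp (z * x) := by
  have hz : z ≠ 0 := by
    rintro rfl
    simp at hzT
  obtain ⟨K, hK⟩ := exists_eq_mul_cexp_add_of_hasDerivAt hz hF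
  have hK0 : K = 0 := by
    have h := hFT 0
    simp only [hK, zero_add, ofReal_zero, mul_zero, exp_zero, mul_one] at h
    have hmul : (exp (z * T) - 1) * K = 0 := by linear_combination -h
    exact (mul_eq_zero.1 hmul).resolve_left (sub_ne_zero.2 hzT)
  rw [hK, hK0, add_zero]

lemma cexp_I_mul_ofReal_ne_one {α : ℝ} (hα : ∀ n : ℤ, α ≠ 2 * Real.pi * n) :
    exp (I * α) ≠ 1 := by
  rw [Ne, exp_eq_one_iff]
  rintro ⟨n, hn⟩
  apply hα n
  have hαn : (α : ℂ) = 2 * Real.pi * n := by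
    linear_combination (-I) * hn + ((α : ℂ) - 2 * Real.pi * n) * I_sq
  exact_mod_cast hαn

theorem stmt8_general (α : ℝ) (hα : ∀ n : ℤ, α ≠ 2 * Real.pi * n) (C : ℂ)
    (Ψ : ℝ → ℂ) (hp : ∀ x, Ψ (x + 1) = Ψ x)
    (hd : ∀ x : ℝ, HasDerivAt (fun y : ℝ => Complex.I * Ψ y * Complex.exp (Complex.I * α * y))
      ((1 - Complex.exp (Complex.I * α)) * C * Complex.exp (Complex.I * α * x)) x) :
    ∀ x : ℝ, Ψ x = -C * (1 - Complex.exp (Complex.I * α)) / (α : ℂ) := by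
  intro x
  have he : exp (I * α * (1 : ℝ)) ≠ 1 := by
    simpa using cexp_I_mul_ofReal_ne_one hα
  have hshift : ∀ y : ℝ, I * Ψ (y + 1) * exp (I * α * ↑(y + 1))
      = exp (I * α * (1 : ℝ)) * (I * Ψ y * exp (I * α * y)) := fun y => by
    rw [hp, ofReal_add, mul_add, exp_add]
    ring
  have hx := eq_mul_cexp_of_hasDerivAt_of_add_eq he hd hshift x
  have hα0 : (α : ℂ) ≠ 0 := by exact_mod_cast (by simpa using hα 0 : α ≠ 0)
  have hΨ : I * Ψ x = (1 - exp (I * α)) * C / (I * α) :=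
    mul_right_cancel₀ (exp_ne_zero (I * α * x)) hx
  rw [eq_div_iff hα0]
  field_simp at hΨ
  linear_combination -hΨ + (Ψ x * α) * I_sq

theorem stmt8 (α : ℝ) (hα : ∀ n : ℤ, α ≠ 2 * Real.pi * n) (C : ℂ)
    (Ψ : ℝ → ℂ) (hc : Continuous Ψ) (hp : ∀ x, Ψ (x + 1) = Ψ x)
    (hd : ∀ x : ℝ, HasDerivAt (fun y : ℝ => Complex.I * Ψ y * Complex.exp (Complex.I * α * y))
      ((1 - Complex.exp (Complex.I * α)) * C * Complex.exp (Complex.I * α * x)) x) :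
    ∀ x : ℝ, Ψ x = -C * (1 - Complex.exp (Complex.I * α)) / (α : ℂ) :=
  stmt8_general α hα C Ψ hp hd
end

section
/- Suppose R : [x₀,∞) → (0,∞) is C¹ and (d/dx) log R(x) = −B(x)/x^{(p−1)γ} + r(x), where B is a continuous 1-periodic function with positive mean ℬ, γ ∈ (1/p, 1/(p−1)) for an integer p ≥ 2, and r ∈ L¹(x₀,∞). Then R(x) = A·exp(−ℬ·x^{1−(p−1)γ}/(1−(p−1)γ))·(1+o(1)) as x → ∞ for some constant A > 0; in particular R ∈ L²(x₀,∞). -/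
/-!
Put `a = (p - 1) γ ∈ (0, 1)`. Since `B - ℬ` is periodic with mean zero, its primitive is bounded,
so an integration by parts against `t ^ (-a)` shows that `∫_{x₀}^x (B - ℬ) t ^ (-a) dt` converges.
Hence `∫_{x₀}^x B t ^ (-a) dt = ℬ x ^ (1 - a) / (1 - a) + const + o(1)`, and integrating the
equation for `(log R)'` gives `log R x + ℬ x ^ (1 - a) / (1 - a) → log A`, the integrable `r`
contributing only a constant. The resulting stretched-exponential decay of `R` beats `x ^ (-1)`,
so `R ^ 2` is integrable.
-/

open Filter MeasureTheory Set Topology Asymptotics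

theorem Function.Periodic.exists_abs_intervalIntegral_sub_mean_le {B : ℝ → ℝ} {T : ℝ}
    (hB : Continuous B) (hBp : Function.Periodic B T) (hT : T ≠ 0) (x₀ : ℝ) :
    ∃ M, ∀ x, |∫ t in x₀..x, (B t - T⁻¹ * ∫ s in 0..T, B s)| ≤ M := by
  set g := fun t => B t - T⁻¹ * ∫ s in 0..T, B s
  have hg : Continuous g := hB.sub continuous_const
  have hG : Function.Periodic (fun x => ∫ t in x₀..x, g t) T := by
    intro x
    have hperiod : ∫ t in x..x + T, g t = 0 := by
      rw [intervalIntegral.integral_sub (hB.intervalIntegrable _ _) intervalIntegrable_const,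
        hBp.intervalIntegral_add_eq x 0, intervalIntegral.integral_const, zero_add]
      simp [smul_eq_mul, mul_inv_cancel_left₀ hT]
    dsimp only
    rw [← intervalIntegral.integral_add_adjacent_intervals (hg.intervalIntegrable x₀ x)
      (hg.intervalIntegrable x (x + T)), hperiod, add_zero]
  obtain ⟨M, hM⟩ := isBounded_iff_forall_norm_le.mp <| hG.isBounded_of_continuous hT
    (intervalIntegral.continuous_primitive hg.intervalIntegrable x₀)
  exact ⟨M, fun x => hM _ (mem_range_self x)⟩

theorem exists_tendsto_intervalIntegral_mul_rpow_neg_of_bounded_primitive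
    {g : ℝ → ℝ} {x₀ a M : ℝ}
    (hg : Continuous g) (hx₀ : 0 < x₀) (ha : 0 < a)
    (hM : ∀ x, x₀ ≤ x → |∫ t in x₀..x, g t| ≤ M) :
    ∃ l, Tendsto (fun x => ∫ t in x₀..x, g t * t ^ (-a)) atTop (𝓝 l) := by
  set G := fun x => ∫ t in x₀..x, g t
  set h := fun t : ℝ => G t * (-a * t ^ (-a - 1))
  have hGcont : Continuous G := intervalIntegral.continuous_primitive hg.intervalIntegrable x₀
  have hrpow : ∀ s : ℝ, ContinuousOn (fun t : ℝ => t ^ s) (Ioi 0) := fun s t ht =>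
    (Real.continuousAt_rpow_const _ _ (Or.inl (mem_Ioi.mp ht).ne')).continuousWithinAt
  have hhcont : ContinuousOn h (Ioi 0) := hGcont.continuousOn.mul ((hrpow _).const_smul (-a))
  have hpos : ∀ x, x₀ ≤ x → uIcc x₀ x ⊆ Ioi 0 := fun x hx t ht =>
    hx₀.trans_le (uIcc_of_le hx ▸ ht).1
  have hparts : ∀ x, x₀ ≤ x →
      ∫ t in x₀..x, g t * t ^ (-a) = G x * x ^ (-a) - ∫ t in x₀..x, h t := by
    intro x hx
    have hibp : ∫ t in x₀..x, g t * t ^ (-a) + h t = G x * x ^ (-a) - G x₀ * x₀ ^ (-a) :=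
      intervalIntegral.integral_deriv_mul_eq_sub
      (u := G) (v := fun t => t ^ (-a)) (u' := g) (v' := fun t => -a * t ^ (-a - 1))
      (fun t _ => (hg.integral_hasStrictDerivAt x₀ t).hasDerivAt)
      (fun t ht => Real.hasDerivAt_rpow_const (Or.inl (hpos x hx ht).ne'))
      (hg.intervalIntegrable _ _) (((hrpow _).mono (hpos x hx)).intervalIntegrable.const_mul _)
    rw [intervalIntegral.integral_add (f := fun t => g t * t ^ (-a))
      ((hg.continuousOn.mul (hrpow _)).mono (hpos x hx)).intervalIntegrable
      (hhcont.mono (hpos x hx)).intervalIntegrable] at hibp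
    simp only [G, intervalIntegral.integral_same, zero_mul, sub_zero] at hibp
    linarith
  have hhint : IntegrableOn h (Ioi x₀) := by
    refine Integrable.mono'
      ((integrableOn_Ioi_rpow_of_lt (by linarith : -a - 1 < -1) hx₀).const_mul (M * a))
      ((hhcont.mono (Ioi_subset_Ioi hx₀.le)).aestronglyMeasurable measurableSet_Ioi) ?_
    filter_upwards [ae_restrict_mem measurableSet_Ioi] with t ht
    have ht0 : 0 < t := hx₀.trans ht
    rw [Real.norm_eq_abs, abs_mul, abs_mul, abs_neg, abs_of_pos ha,
      abs_of_pos (Real.rpow_pos_of_pos ht0 _)]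
    rw [mul_assoc M]
    exact mul_le_mul_of_nonneg_right (hM t ht.le) (by positivity)
  have hboundary : Tendsto (fun x => G x * x ^ (-a)) atTop (𝓝 0) := by
    refine squeeze_zero_norm' ?_ (by simpa using (tendsto_rpow_neg_atTop ha).const_mul M)
    filter_upwards [eventually_ge_atTop x₀] with x hx
    rw [Real.norm_eq_abs, abs_mul, abs_of_pos (Real.rpow_pos_of_pos (hx₀.trans_le hx) _)]
    exact mul_le_mul_of_nonneg_right (hM x hx) (Real.rpow_nonneg (hx₀.le.trans hx) _)
  refine ⟨0 - ∫ t in Ioi x₀, h t, (hboundary.sub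
    (intervalIntegral_tendsto_integral_Ioi x₀ hhint tendsto_id)).congr' ?_⟩
  filter_upwards [eventually_ge_atTop x₀] with x hx
  exact (hparts x hx).symm

theorem Function.Periodic.exists_tendsto_intervalIntegral_div_rpow_sub
    {B : ℝ → ℝ} {T a x₀ : ℝ}
    (hB : Continuous B) (hBp : Function.Periodic B T) (hT : T ≠ 0)
    (ha₀ : 0 < a) (ha₁ : a ≠ 1) (hx₀ : 0 < x₀) :
    ∃ l, Tendsto (fun x => (∫ t in x₀..x, B t / t ^ a)
      - (T⁻¹ * ∫ s in 0..T, B s) / (1 - a) * x ^ (1 - a)) atTop (𝓝 l) := by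
  set m := T⁻¹ * ∫ s in 0..T, B s
  obtain ⟨M, hM⟩ := hBp.exists_abs_intervalIntegral_sub_mean_le hB hT x₀
  obtain ⟨l, hl⟩ := exists_tendsto_intervalIntegral_mul_rpow_neg_of_bounded_primitive
    (g := fun t => B t - m) (hB.sub continuous_const) hx₀ ha₀ (fun x _ => hM x)
  refine ⟨l - m / (1 - a) * x₀ ^ (1 - a), (hl.sub_const _).congr' ?_⟩
  filter_upwards [eventually_ge_atTop x₀] with x hx
  have hpos : ∀ t ∈ uIcc x₀ x, 0 < t := fun t ht => hx₀.trans_le (uIcc_of_le hx ▸ ht).1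
  have hrpow : ContinuousOn (fun t : ℝ => t ^ (-a)) (uIcc x₀ x) := fun t ht =>
    (Real.continuousAt_rpow_const _ _ (Or.inl (hpos t ht).ne')).continuousWithinAt
  have hmean : ∫ t in x₀..x, m * t ^ (-a) = m / (1 - a) * (x ^ (1 - a) - x₀ ^ (1 - a)) := by
    rw [intervalIntegral.integral_const_mul, integral_rpow
      (Or.inr ⟨fun h => ha₁ (by linarith), fun h0 => (hpos 0 h0).false⟩), neg_add_eq_sub]
    ring
  have hsplit : ∫ t in x₀..x, B t / t ^ a =
      (∫ t in x₀..x, (B t - m) * t ^ (-a)) + ∫ t in x₀..x, m * t ^ (-a) := by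
    rw [← intervalIntegral.integral_add (f := fun t => (B t - m) * t ^ (-a))
      (g := fun t => m * t ^ (-a))
      ((hB.sub continuous_const).continuousOn.mul hrpow).intervalIntegrable
      (continuousOn_const.mul hrpow).intervalIntegrable]
    refine intervalIntegral.integral_congr fun t ht => ?_
    simp only [Real.rpow_neg (hpos t ht).le]
    ring
  rw [hsplit, hmean]
  ring

theorem tendsto_sub_of_hasDerivAt_add_integrableOn {f g r φ : ℝ → ℝ} {x₀ l : ℝ}
    (hf : ∀ x, x₀ ≤ x → HasDerivAt f (g x + r x) x) (hg : ContinuousOn g (Ici x₀))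
    (hr : IntegrableOn r (Ioi x₀))
    (hφ : Tendsto (fun x => (∫ t in x₀..x, g t) - φ x) atTop (𝓝 l)) :
    Tendsto (fun x => f x - φ x) atTop (𝓝 (f x₀ + l + ∫ t in Ioi x₀, r t)) := by
  refine ((hφ.const_add (f x₀)).add
    (intervalIntegral_tendsto_integral_Ioi x₀ hr tendsto_id)).congr' ?_
  filter_upwards [eventually_ge_atTop x₀] with x hx
  have hgi : IntervalIntegrable g volume x₀ x :=
    (hg.mono (uIcc_of_le hx ▸ Icc_subset_Ici_self)).intervalIntegrable
  have hri : IntervalIntegrable r volume x₀ x :=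
    (intervalIntegrable_iff_integrableOn_Ioc_of_le hx).mpr (hr.mono_set Ioc_subset_Ioi_self)
  have hftc := intervalIntegral.integral_eq_sub_of_hasDerivAt
    (fun t ht => hf t (uIcc_of_le hx ▸ ht).1) (hgi.add hri)
  rw [intervalIntegral.integral_add hgi hri] at hftc
  simp only [id]
  linarith

theorem tendsto_div_exp_of_tendsto_log_sub {α : Type*} {l : Filter α} {f φ : α → ℝ} {L : ℝ}
    (hf : ∀ᶠ x in l, 0 < f x) (h : Tendsto (fun x => Real.log (f x) - φ x) l (𝓝 L)) :
    Tendsto (fun x => f x / Real.exp (φ x)) l (𝓝 (Real.exp L)) := by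
  refine ((Real.continuous_exp.tendsto L).comp h).congr' ?_
  filter_upwards [hf] with x hx
  simp only [Function.comp, Real.exp_sub, Real.exp_log hx]

theorem isLittleO_exp_neg_mul_rpow_rpow_atTop {c β : ℝ} (hc : 0 < c) (hβ : 0 < β) (s : ℝ) :
    (fun x : ℝ => Real.exp (-c * x ^ β)) =o[atTop] fun x => x ^ s := by
  refine ((isLittleO_exp_neg_mul_rpow_atTop hc (s / β)).comp_tendsto
    (tendsto_rpow_atTop hβ)).congr' EventuallyEq.rfl ?_
  filter_upwards [eventually_ge_atTop 0] with x hx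
  simp only [Function.comp, ← Real.rpow_mul hx, mul_div_cancel₀ _ hβ.ne']

theorem integrableOn_Ioi_sq_of_tendsto_div_exp {R : ℝ → ℝ} {x₀ c β A : ℝ}
    (hR : ContinuousOn R (Ici x₀)) (hc : 0 < c) (hβ : 0 < β)
    (h : Tendsto (fun x => R x / Real.exp (-c * x ^ β)) atTop (𝓝 A)) :
    IntegrableOn (fun x => R x ^ 2) (Ioi x₀) := by
  have hO : R =O[atTop] fun x => Real.exp (-c * x ^ β) :=
    isBigO_of_div_tendsto_nhds (Eventually.of_forall fun _ h0 => absurd h0 (Real.exp_ne_zero _))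
      A h
  have hO2 : (fun x => R x ^ 2) =O[atTop] fun x : ℝ => x ^ (-2 : ℝ) := by
    refine ((hO.pow 2).congr_right fun x => ?_).trans
      (isLittleO_exp_neg_mul_rpow_rpow_atTop (by positivity : 0 < 2 * c) hβ _).isBigO
    rw [← Real.exp_nat_mul]
    push_cast
    ring_nf
  exact ((hR.pow 2).locallyIntegrableOn measurableSet_Ici |>.integrableOn_of_isBigO_atTop hO2
    (integrableAtFilter_rpow_atTop_iff.mpr (by norm_num))).mono_set Ioi_subset_Ici_self

theorem stmt10 (p : ℕ) (hp : 2 ≤ p) (γ : ℝ)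
    (hγ₁ : 1 / (p : ℝ) < γ) (hγ₂ : γ < 1 / ((p : ℝ) - 1))
    (x₀ : ℝ) (hx₀ : 0 < x₀)
    (B : ℝ → ℝ) (hBc : Continuous B) (hBp : ∀ x, B (x + 1) = B x)
    (Bbar : ℝ) (hBbar : Bbar = ∫ t in (0:ℝ)..1, B t) (hBpos : 0 < Bbar)
    (r : ℝ → ℝ) (hr : MeasureTheory.IntegrableOn r (Set.Ioi x₀))
    (R : ℝ → ℝ) (hRpos : ∀ x, x₀ ≤ x → 0 < R x)
    (hR : ∀ x : ℝ, x₀ ≤ x →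
      HasDerivAt (fun y => Real.log (R y)) (-B x / x ^ (((p : ℝ) - 1) * γ) + r x) x) :
    (∃ A : ℝ, 0 < A ∧ Tendsto
      (fun x : ℝ => R x / Real.exp (-(Bbar / (1 - ((p : ℝ) - 1) * γ)) * x ^ (1 - ((p : ℝ) - 1) * γ)))
      atTop (nhds A)) ∧
    MeasureTheory.IntegrableOn (fun x => (R x) ^ 2) (Set.Ioi x₀) := by
  set a := ((p : ℝ) - 1) * γ
  have hγ : 0 < γ := lt_trans (by positivity) hγ₁
  have hp₁ : (1 : ℝ) < p := by exact_mod_cast hp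
  have ha₀ : 0 < a := mul_pos (by linarith) hγ
  have ha₁ : a < 1 := by
    have := (lt_div_iff₀ (by linarith : (0 : ℝ) < p - 1)).mp hγ₂
    linarith
  obtain ⟨l, hl⟩ := Function.Periodic.exists_tendsto_intervalIntegral_div_rpow_sub hBc hBp
    one_ne_zero ha₀ ha₁.ne hx₀
  rw [inv_one, one_mul, ← hBbar] at hl
  have hφ : Tendsto (fun x => (∫ t in x₀..x, -B t / t ^ a)
      - -(Bbar / (1 - a)) * x ^ (1 - a)) atTop (𝓝 (-l)) := by
    refine hl.neg.congr fun x => ?_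
    simp only [neg_div, intervalIntegral.integral_neg]
    ring
  have hBa : ContinuousOn (fun x => -B x / x ^ a) (Ici x₀) := fun x hx =>
    ((hBc.neg.continuousAt).div (Real.continuousAt_rpow_const _ _ (Or.inl (hx₀.trans_le hx).ne'))
      (Real.rpow_pos_of_pos (hx₀.trans_le hx) _).ne').continuousWithinAt
  have hRcont : ContinuousOn R (Ici x₀) := fun x hx =>
    ((hR x hx).continuousAt.continuousWithinAt.rexp).congr
      (fun y hy => (Real.exp_log (hRpos y hy)).symm) (Real.exp_log (hRpos x hx)).symm
  have hlim := tendsto_div_exp_of_tendsto_log_sub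
    ((eventually_ge_atTop x₀).mono hRpos)
    (tendsto_sub_of_hasDerivAt_add_integrableOn hR hBa hr hφ)
  exact ⟨⟨_, Real.exp_pos _, hlim⟩, integrableOn_Ioi_sq_of_tendsto_div_exp hRcont
    (div_pos hBpos (by linarith)) (by linarith) hlim⟩
end

section
/- Suppose R : [x₀,∞) → (0,∞) is C¹ and (d/dx) log R(x) = −B(x)/x + r(x), where B is a continuous 1-periodic function with mean ℬ > 0 and r ∈ L¹(x₀,∞). Then there exists A > 0 such that R(x) = A·x^{−ℬ}·(1+o(1)) as x → ∞. -/
/-!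
Write `g = ℬ - B`, a continuous 1-periodic function of mean zero, so that its primitive `G` is
bounded. Then `log (x ^ ℬ * R x)` has derivative `g x / x + r x`, and subtracting `G x / x`
leaves a function whose derivative `G x / x ^ 2 + r x` is integrable at infinity. Hence
`log (x ^ ℬ * R x)` converges, and so does `x ^ ℬ * R x`, to the exponential of the limit.
-/

open Filter MeasureTheory Set Topology

namespace Function.Periodic

theorem exists_abs_intervalIntegral_le {g : ℝ → ℝ} {T : ℝ} (hg : Periodic g T) (hT : 0 < T)
    (h_int : IntervalIntegrable g volume 0 T) (h_mean : ∫ x in 0..T, g x = 0) :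
    ∃ C, ∀ t, |∫ x in 0..t, g x| ≤ C := by
  set m := sInf ((fun t => ∫ x in 0..t, g x) '' Icc 0 T)
  set M := sSup ((fun t => ∫ x in 0..t, g x) '' Icc 0 T)
  refine ⟨max |m| |M|, fun t => abs_le.2 ⟨?_, ?_⟩⟩
  · have hlow := hg.sInf_add_zsmul_le_integral_of_pos h_int hT t
    rw [h_mean, smul_zero, add_zero] at hlow
    linarith [neg_abs_le m, le_max_left |m| |M|]
  · have hup := hg.integral_le_sSup_add_zsmul_of_pos h_int hT t
    rw [h_mean, smul_zero, add_zero] at hup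
    linarith [le_abs_self M, le_max_right |m| |M|]

end Function.Periodic

section BoundedPrimitive

variable {G : ℝ → ℝ} {a C : ℝ}

theorem integrableOn_Ioi_div_sq_of_abs_le (ha : 0 < a) (hG : ContinuousOn G (Ioi a))
    (hGC : ∀ x ∈ Ioi a, |G x| ≤ C) : IntegrableOn (fun x => G x / x ^ 2) (Ioi a) := by
  have hpos : ∀ x ∈ Ioi a, 0 < x := fun x hx => ha.trans hx
  refine ((integrableOn_Ioi_rpow_of_lt (by norm_num : (-2 : ℝ) < -1) ha).const_mul C).mono' ?_ ?_
  · exact (hG.div (continuousOn_pow 2) fun x hx => (pow_pos (hpos x hx) 2).ne')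
      |>.aestronglyMeasurable measurableSet_Ioi
  · filter_upwards [ae_restrict_mem measurableSet_Ioi] with x hx
    have hx0 := hpos x hx
    rw [Real.norm_eq_abs, abs_div, abs_of_pos (pow_pos hx0 2), Real.rpow_neg hx0.le,
      Real.rpow_two, div_eq_mul_inv]
    exact mul_le_mul_of_nonneg_right (hGC x hx) (by positivity)

theorem tendsto_div_atTop_zero_of_abs_le (hGC : ∀ x ∈ Ioi a, |G x| ≤ C) :
    Tendsto (fun x => G x / x) atTop (𝓝 0) := by
  refine squeeze_zero_norm' ?_ (tendsto_const_nhds.div_atTop tendsto_id (a := C))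
  filter_upwards [eventually_gt_atTop a, eventually_gt_atTop 0] with x hxa hx0
  rw [Real.norm_eq_abs, abs_div, abs_of_pos hx0]
  exact div_le_div_of_nonneg_right (hGC x hxa) hx0.le

theorem exists_tendsto_of_hasDerivAt_div_add {f g r : ℝ → ℝ} (ha : 0 < a)
    (hG : ∀ x ∈ Ioi a, HasDerivAt G (g x) x) (hGC : ∀ x ∈ Ioi a, |G x| ≤ C)
    (hr : IntegrableOn r (Ioi a)) (hf : ∀ x ∈ Ioi a, HasDerivAt f (g x / x + r x) x) :
    ∃ L, Tendsto f atTop (𝓝 L) := by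
  have hGcont : ContinuousOn G (Ioi a) := fun x hx => (hG x hx).continuousAt.continuousWithinAt
  have hderiv : ∀ x ∈ Ioi a,
      HasDerivAt (fun y => f y - G y / y) (G x / x ^ 2 + r x) x := by
    intro x hx
    have hx0 : x ≠ 0 := (ha.trans hx).ne'
    refine ((hf x hx).sub ((hG x hx).div (hasDerivAt_id x) hx0)).congr_deriv ?_
    simp only [id]
    field_simp
    ring
  have hlim := tendsto_limUnder_of_hasDerivAt_of_integrableOn_Ioi hderiv
    ((integrableOn_Ioi_div_sq_of_abs_le ha hGcont hGC).add hr)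
  refine ⟨_, (hlim.add (tendsto_div_atTop_zero_of_abs_le hGC)).congr fun x => ?_⟩
  ring

end BoundedPrimitive

theorem stmt11_general (x₀ : ℝ) (hx₀ : 1 < x₀)
    (B : ℝ → ℝ) (hBc : Continuous B) (hBp : ∀ x, B (x + 1) = B x)
    (Bbar : ℝ) (hBbar : Bbar = ∫ t in (0:ℝ)..1, B t)
    (r : ℝ → ℝ) (hr : MeasureTheory.IntegrableOn r (Set.Ioi x₀))
    (R : ℝ → ℝ) (hRpos : ∀ x, x₀ ≤ x → 0 < R x)
    (hR : ∀ x : ℝ, x₀ ≤ x → HasDerivAt (fun y => Real.log (R y)) (-B x / x + r x) x) :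
    ∃ A : ℝ, 0 < A ∧ Tendsto (fun x : ℝ => x ^ Bbar * R x) atTop (nhds A) := by
  have hx₀pos : 0 < x₀ := by linarith
  have hgc : Continuous fun t => Bbar - B t := continuous_const.sub hBc
  have hg_mean : ∫ t in (0:ℝ)..1, (Bbar - B t) = 0 := by
    rw [intervalIntegral.integral_sub intervalIntegrable_const (hBc.intervalIntegrable 0 1)]
    simp [hBbar]
  obtain ⟨C, hC⟩ := Function.Periodic.exists_abs_intervalIntegral_le
    (fun x => by simp only [hBp]) one_pos (hgc.intervalIntegrable 0 1) hg_mean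
  have hlog : ∀ x ∈ Ioi x₀, HasDerivAt (fun y => Bbar * Real.log y + Real.log (R y))
      ((Bbar - B x) / x + r x) x := fun x hx => by
    refine (((Real.hasDerivAt_log (hx₀pos.trans hx).ne').const_mul Bbar).add
      (hR x (le_of_lt hx))).congr_deriv ?_
    ring
  obtain ⟨L, hL⟩ := exists_tendsto_of_hasDerivAt_div_add hx₀pos
    (fun x _ => (hgc.integral_hasStrictDerivAt 0 x).hasDerivAt) (fun x _ => hC x) hr hlog
  refine ⟨Real.exp L, Real.exp_pos L, ((Real.continuous_exp.tendsto L).comp hL).congr' ?_⟩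
  filter_upwards [eventually_ge_atTop x₀] with x hx
  rw [Function.comp_apply, Real.exp_add, Real.exp_log (hRpos x hx),
    Real.rpow_def_of_pos (hx₀pos.trans_le hx), mul_comm (Real.log x)]

theorem stmt11 (x₀ : ℝ) (hx₀ : 1 < x₀)
    (B : ℝ → ℝ) (hBc : Continuous B) (hBp : ∀ x, B (x + 1) = B x)
    (Bbar : ℝ) (hBbar : Bbar = ∫ t in (0:ℝ)..1, B t) (hBpos : 0 < Bbar)
    (r : ℝ → ℝ) (hr : MeasureTheory.IntegrableOn r (Set.Ioi x₀))
    (R : ℝ → ℝ) (hRpos : ∀ x, x₀ ≤ x → 0 < R x)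
    (hR : ∀ x : ℝ, x₀ ≤ x → HasDerivAt (fun y => Real.log (R y)) (-B x / x + r x) x) :
    ∃ A : ℝ, 0 < A ∧ Tendsto (fun x : ℝ => x ^ Bbar * R x) atTop (nhds A) :=
  stmt11_general x₀ hx₀ B hBc hBp Bbar hBbar r hr R hRpos hR
end

section
/- Let ν be a finite measure on [−π, π] that is uniformly β-Hölder continuous (ν(I) ≤ C·|I|^β for all intervals I). Then for any φ ∈ ℝ, ∫_{[−π,π]} |1 − e^{i(2k−φ)}|^{−s} dν(k) < ∞ whenever 0 < s < β. -/
open MeasureTheory Real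

theorem lemA (ν : Measure ℝ) (C β : ℝ) (hβ0 : 0 < β)
    (hH : ∀ a b : ℝ, a ≤ b → ν (Set.Icc a b) ≤ ENNReal.ofReal (C * (b - a) ^ β))
    (hC : 0 ≤ C) (s : ℝ) (hs0 : 0 < s) (hsβ : s < β) (a : ℝ) :
    (∫⁻ k in Set.Icc (-π) π, (ENNReal.ofReal |k - a|) ^ (-s) ∂ν) < ⊤ := by
  set R : ℝ := π + |a| + 1 with hR
  have hRpos : 0 < R := by positivity
  set E : ℕ → Set ℝ := fun n => {k : ℝ | R * (1/2)^(n+1) ≤ |k - a| ∧ |k - a| < R * (1/2)^n} with hE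
  -- covering
  have hcov : Set.Icc (-π) π ⊆ {a} ∪ ⋃ n, E n := by
    intro k hk
    rcases eq_or_ne k a with rfl | hka
    · exact Or.inl rfl
    · right
      have hd0 : 0 < |k - a| := abs_pos.mpr (sub_ne_zero.mpr hka)
      have hdR : |k - a| < R := by
        have h1 : |k| ≤ π := abs_le.mpr ⟨hk.1, hk.2⟩
        calc |k - a| ≤ |k| + |a| := abs_sub _ _
        _ < R := by rw [hR]; linarith
      have hex : ∃ n : ℕ, R * (1/2)^n ≤ |k - a| := by
        obtain ⟨n, hn⟩ := exists_pow_lt_of_lt_one (x := |k - a| / R) (by positivity)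
          (by norm_num : (1:ℝ)/2 < 1)
        exact ⟨n, by rw [mul_comm]; exact (le_div_iff₀ hRpos).mp hn.le⟩
      classical
      let n := Nat.find hex
      have hn1 : R * (1/2)^n ≤ |k - a| := Nat.find_spec hex
      have hnpos : n ≠ 0 := by
        intro h0
        have := hn1
        rw [h0] at this; simp at this; linarith
      obtain ⟨m, hm⟩ := Nat.exists_eq_succ_of_ne_zero hnpos
      have hlt : |k - a| < R * (1/2)^m := by
        by_contra h
        exact Nat.find_min hex (by omega : m < n) (not_lt.mp h)
      rw [hm] at hn1
      exact Set.mem_iUnion.mpr ⟨m, ⟨hn1, hlt⟩⟩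
  have hmono := lintegral_mono_set (μ := ν)
    (f := fun k => (ENNReal.ofReal |k - a|) ^ (-s)) hcov
  have hsingle : ν {a} = 0 := by
    have := hH a a le_rfl
    simp only [Set.Icc_self, sub_self, Real.zero_rpow hβ0.ne', mul_zero,
      ENNReal.ofReal_zero] at this
    exact le_zero_iff.mp (by simpa using this)
  -- bound on each E n
  set r : ℝ := (1/2 : ℝ) ^ (β - s) with hr
  have hr01 : 0 < r ∧ r < 1 := by
    constructor
    · exact Real.rpow_pos_of_pos (by norm_num) _
    · exact Real.rpow_lt_one (by norm_num) (by norm_num) (by linarith)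
  set K : ℝ := (R/2)^(-s) * C * (2*R)^β with hK
  have hEn : ∀ n : ℕ, (∫⁻ k in E n, (ENNReal.ofReal |k - a|) ^ (-s) ∂ν)
      ≤ ENNReal.ofReal (K * r ^ n) := by
    intro n
    have hlow : (0:ℝ) < R * (1/2)^(n+1) := by positivity
    have hb : ∀ k ∈ E n, (ENNReal.ofReal |k - a|) ^ (-s)
        ≤ ENNReal.ofReal ((R * (1/2)^(n+1)) ^ (-s)) := by
      intro k hk
      rw [← ENNReal.ofReal_rpow_of_pos hlow, ENNReal.rpow_neg, ENNReal.rpow_neg,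
        ENNReal.inv_le_inv]
      exact ENNReal.rpow_le_rpow (ENNReal.ofReal_le_ofReal hk.1) hs0.le
    have hEmeas : MeasurableSet (E n) := by
      have he : E n = (fun k => |k - a|) ⁻¹' Set.Ico (R * (1/2)^(n+1)) (R * (1/2)^n) := rfl
      rw [he]
      exact (continuous_abs.comp (continuous_id.sub continuous_const)).measurable
        measurableSet_Ico
    calc (∫⁻ k in E n, (ENNReal.ofReal |k - a|) ^ (-s) ∂ν)
        ≤ ∫⁻ _ in E n, ENNReal.ofReal ((R * (1/2)^(n+1)) ^ (-s)) ∂ν :=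
          setLIntegral_mono (by fun_prop) hb
      _ = ENNReal.ofReal ((R * (1/2)^(n+1)) ^ (-s)) * ν (E n) := by
          rw [setLIntegral_const]
      _ ≤ ENNReal.ofReal ((R * (1/2)^(n+1)) ^ (-s)) *
          ENNReal.ofReal (C * (2 * (R * (1/2)^n)) ^ β) := by
          gcongr
          have hsub : E n ⊆ Set.Icc (a - R * (1/2)^n) (a + R * (1/2)^n) := by
            intro k hk
            have := abs_le.mp hk.2.le
            constructor <;> linarith [this.1, this.2]
          refine (measure_mono hsub).trans ?_
          have := hH (a - R * (1/2)^n) (a + R * (1/2)^n) (by nlinarith [pow_pos (by norm_num : (0:ℝ) < 1/2) n])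
          convert this using 3
          · rfl
          · ring
      _ = ENNReal.ofReal (K * r ^ n) := by
          rw [← ENNReal.ofReal_mul (by positivity)]
          congr 1
          have h2 : (0:ℝ) < (1/2:ℝ)^n := by positivity
          have e1 : ((1/2:ℝ)^n) ^ (-s) * ((1/2:ℝ)^n) ^ β = r ^ n := by
            rw [← Real.rpow_natCast ((1:ℝ)/2) n,
              ← Real.rpow_mul (by norm_num : (0:ℝ) ≤ 1/2),
              ← Real.rpow_mul (by norm_num : (0:ℝ) ≤ 1/2),
              ← Real.rpow_add (by norm_num : (0:ℝ) < 1/2), hr,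
              ← Real.rpow_natCast ((1/2:ℝ) ^ (β - s)) n,
              ← Real.rpow_mul (by norm_num : (0:ℝ) ≤ 1/2)]
            congr 1
            ring
          rw [show R * (1/2)^(n+1) = (R/2) * (1/2)^n by ring,
            Real.mul_rpow (by positivity) h2.le,
            show (2:ℝ) * (R * (1/2)^n) = (2*R) * (1/2)^n by ring,
            Real.mul_rpow (by positivity : (0:ℝ) ≤ 2*R) h2.le, hK,
            Real.mul_rpow (by norm_num : (0:ℝ) ≤ 2) hRpos.le]
          linear_combination ((R/2) ^ (-s) * C * 2 ^ β * R ^ β) * e1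
  -- sum
  have hsum : (∑' n, ∫⁻ k in E n, (ENNReal.ofReal |k - a|) ^ (-s) ∂ν) < ⊤ := by
    have hle : (∑' n, ∫⁻ k in E n, (ENNReal.ofReal |k - a|) ^ (-s) ∂ν)
        ≤ ∑' n : ℕ, ENNReal.ofReal (K * r ^ n) := ENNReal.tsum_le_tsum hEn
    have hsummable : Summable (fun n : ℕ => K * r ^ n) :=
      (summable_geometric_of_lt_one hr01.1.le hr01.2).mul_left K
    rw [← ENNReal.ofReal_tsum_of_nonneg (fun n => by positivity) hsummable] at hle
    exact hle.trans_lt ENNReal.ofReal_lt_top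
  refine hmono.trans_lt ?_
  calc (∫⁻ k in {a} ∪ ⋃ n, E n, (ENNReal.ofReal |k - a|) ^ (-s) ∂ν)
      ≤ (∫⁻ k in {a}, (ENNReal.ofReal |k - a|) ^ (-s) ∂ν)
        + ∫⁻ k in ⋃ n, E n, (ENNReal.ofReal |k - a|) ^ (-s) ∂ν := lintegral_union_le _ _ _
    _ ≤ 0 + ∑' n, ∫⁻ k in E n, (ENNReal.ofReal |k - a|) ^ (-s) ∂ν := by
        gcongr
        · exact le_of_eq (setLIntegral_measure_zero _ _ hsingle)
        · exact lintegral_iUnion_le _ _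
    _ < ⊤ := by simpa using hsum

theorem lemB (x : ℝ) (hx : |x| ≤ π) :
    2 / π * |x| ≤ ‖(1 : ℂ) - Complex.exp (Complex.I * x)‖ := by
  set n := ‖(1 : ℂ) - Complex.exp (Complex.I * x)‖ with hndef
  have hsq : n ^ 2 = 2 - 2 * Real.cos x := by
    rw [hndef, mul_comm, Complex.exp_mul_I, Complex.sq_norm,
      Complex.normSq_apply]
    simp [Complex.cos_ofReal_re, Complex.sin_ofReal_re]
    nlinarith [Real.sin_sq_add_cos_sq x]
  have ht : 2 / π * |x / 2| ≤ |Real.sin (x / 2)| := by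
    apply Real.mul_abs_le_abs_sin
    rw [abs_div, abs_two]
    linarith [abs_nonneg x, pi_pos]
  have ht2 : Real.sin (x/2) ^ 2 = 1/2 - Real.cos x / 2 := by
    have := Real.sin_sq_eq_half_sub (x/2)
    rw [show 2 * (x/2) = x by ring] at this
    linarith
  have hn : (0:ℝ) ≤ n := norm_nonneg _
  have hax : |x/2| = |x|/2 := by rw [abs_div, abs_two]
  have heq : n = 2 * |Real.sin (x/2)| := by
    have h4 : n^2 = (2*|Real.sin (x/2)|)^2 := by
      rw [hsq, mul_pow, sq_abs]; nlinarith
    calc n = Real.sqrt (n^2) := (Real.sqrt_sq hn).symm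
    _ = Real.sqrt ((2*|Real.sin (x/2)|)^2) := by rw [h4]
    _ = 2*|Real.sin (x/2)| := Real.sqrt_sq (by positivity)
  have hx2 : 2/π * |x| = 2 * (2/π * |x/2|) := by rw [hax]; ring
  rw [heq, hx2]
  linarith

theorem stmt17_lemC (φ k : ℝ) :
    4/π * |k - (φ/2 + π * round ((2*k - φ)/(2*π)))| ≤
      ‖(1 : ℂ) - Complex.exp (Complex.I * (2*k - φ))‖ := by
  set θ : ℝ := 2*k - φ with hθ
  set nn : ℤ := round (θ/(2*π)) with hnn
  set x : ℝ := θ - 2*π*nn with hx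
  have hπ : (0:ℝ) < π := pi_pos
  have hxπ : |x| ≤ π := by
    have h1 : |θ/(2*π) - nn| ≤ 1/2 := abs_sub_round _
    have h2 : x = 2*π * (θ/(2*π) - nn) := by
      rw [hx]; field_simp
    rw [h2, abs_mul, abs_of_pos (by linarith : (0:ℝ) < 2*π)]
    nlinarith
  have hexp : Complex.exp (Complex.I * θ) = Complex.exp (Complex.I * x) := by
    have : (Complex.I * θ) = Complex.I * x + nn * (2*π*Complex.I) := by
      rw [hx]; push_cast; ring
    rw [this, Complex.exp_add, Complex.exp_int_mul_two_pi_mul_I, mul_one]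
  have hB := lemB x hxπ
  rw [← hexp] at hB
  have hcast : ((θ : ℝ) : ℂ) = 2 * (k:ℂ) - (φ:ℂ) := by rw [hθ]; push_cast; ring
  rw [hcast] at hB
  have habs : |x| = 2 * |k - (φ/2 + π * nn)| := by
    have hxe : x = 2 * (k - (φ/2 + π * nn)) := by rw [hx, hθ]; ring
    rw [hxe, abs_mul, abs_two]
  calc 4/π * |k - (φ/2 + π * nn)| = 2/π * |x| := by rw [habs]; ring
  _ ≤ _ := hB

theorem stmt17 (ν : Measure ℝ) [IsFiniteMeasure ν]
    (C β : ℝ) (hβ0 : 0 < β) (hβ1 : β ≤ 1)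
    (hH : ∀ a b : ℝ, a ≤ b → ν (Set.Icc a b) ≤ ENNReal.ofReal (C * (b - a) ^ β))
    (φ s : ℝ) (hs0 : 0 < s) (hsβ : s < β) :
    (∫⁻ k in Set.Icc (-π) π,
      (ENNReal.ofReal ‖(1 : ℂ) - Complex.exp (Complex.I * (2 * k - φ))‖) ^ (-s) ∂ν) < ⊤ := by
  have hπ : (0:ℝ) < π := pi_pos
  have hH' : ∀ a b : ℝ, a ≤ b → ν (Set.Icc a b) ≤ ENNReal.ofReal (max C 0 * (b - a) ^ β) := by
    intro a b hab
    refine (hH a b hab).trans (ENNReal.ofReal_le_ofReal ?_)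
    exact mul_le_mul_of_nonneg_right (le_max_left C 0)
      (Real.rpow_nonneg (sub_nonneg.mpr hab) β)
  set n₀ : ℤ := round (-φ/(2*π)) with hn₀
  set a : ℤ → ℝ := fun m => φ/2 + π * m with ha
  set F : ℝ → ℝ → ENNReal := fun c k => (ENNReal.ofReal |k - c|) ^ (-s) with hF
  have hFmeas : ∀ c, Measurable (F c) := by intro c; fun_prop
  set Kc : ENNReal := ENNReal.ofReal ((4/π) ^ (-s)) with hKc
  -- pointwise bound
  have hpt : ∀ k ∈ Set.Icc (-π) π,
      (ENNReal.ofReal ‖(1 : ℂ) - Complex.exp (Complex.I * (2 * k - φ))‖) ^ (-s)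
        ≤ Kc * (F (a (n₀ - 1)) k + F (a n₀) k + F (a (n₀ + 1)) k) := by
    intro k hk
    have roundmono : ∀ x y : ℝ, x ≤ y → round x ≤ round y := fun x y h => by
      rw [round_eq, round_eq]; exact Int.floor_mono (by linarith)
    set nn : ℤ := round ((2*k - φ)/(2*π)) with hnn
    have hrange : n₀ - 1 ≤ nn ∧ nn ≤ n₀ + 1 := by
      have hval : (2*k - φ)/(2*π) = -φ/(2*π) + k/π := by field_simp; ring
      have hk1 : -1 ≤ k/π := by
        rw [le_div_iff₀ hπ]; linarith [hk.1]
      have hk2 : k/π ≤ 1 := by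
        rw [div_le_one hπ]; exact hk.2
      constructor
      · have : round (-φ/(2*π) + (-1:ℤ)) ≤ nn := by
          rw [hnn, hval]
          exact roundmono _ _ (by push_cast; linarith)
        rwa [round_add_intCast] at this
      · have : nn ≤ round (-φ/(2*π) + (1:ℤ)) := by
          rw [hnn, hval]
          exact roundmono _ _ (by push_cast; linarith)
        rwa [round_add_intCast] at this
    have hC := stmt17_lemC φ k
    rw [← hnn] at hC
    -- main chain
    have h1 : (ENNReal.ofReal ‖(1 : ℂ) - Complex.exp (Complex.I * (2 * k - φ))‖) ^ (-s)
        ≤ Kc * F (a nn) k := by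
      have hmul : ENNReal.ofReal (4/π * |k - a nn|)
          ≤ ENNReal.ofReal ‖(1 : ℂ) - Complex.exp (Complex.I * (2 * k - φ))‖ :=
        ENNReal.ofReal_le_ofReal (by rw [ha]; exact hC)
      have hanti : (ENNReal.ofReal ‖(1 : ℂ) - Complex.exp (Complex.I * (2 * k - φ))‖) ^ (-s)
          ≤ (ENNReal.ofReal (4/π * |k - a nn|)) ^ (-s) := by
        rw [ENNReal.rpow_neg, ENNReal.rpow_neg, ENNReal.inv_le_inv]
        exact ENNReal.rpow_le_rpow hmul hs0.le
      refine hanti.trans ?_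
      rw [ENNReal.ofReal_mul (by positivity : (0:ℝ) ≤ 4/π),
        ENNReal.mul_rpow_of_ne_top ENNReal.ofReal_ne_top ENNReal.ofReal_ne_top,
        ENNReal.ofReal_rpow_of_pos (by positivity : (0:ℝ) < 4/π)]
    refine h1.trans ?_
    gcongr
    have : nn = n₀ - 1 ∨ nn = n₀ ∨ nn = n₀ + 1 := by omega
    rcases this with h | h | h <;> rw [h]
    · calc F (a (n₀-1)) k ≤ F (a (n₀-1)) k + F (a n₀) k := le_self_add
        _ ≤ _ := le_self_add
    · calc F (a n₀) k ≤ F (a (n₀-1)) k + F (a n₀) k := le_add_self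
        _ ≤ _ := le_self_add
    · exact le_add_self
  -- integrate
  have hint : (∫⁻ k in Set.Icc (-π) π,
      (ENNReal.ofReal ‖(1 : ℂ) - Complex.exp (Complex.I * (2 * k - φ))‖) ^ (-s) ∂ν)
      ≤ Kc * ((∫⁻ k in Set.Icc (-π) π, F (a (n₀-1)) k ∂ν)
          + (∫⁻ k in Set.Icc (-π) π, F (a n₀) k ∂ν)
          + (∫⁻ k in Set.Icc (-π) π, F (a (n₀+1)) k ∂ν)) := by
    refine (setLIntegral_mono (by fun_prop) hpt).trans ?_
    rw [lintegral_const_mul _ (by fun_prop)]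
    gcongr
    rw [lintegral_add_left (by fun_prop), lintegral_add_left (by fun_prop)]
  refine hint.trans_lt ?_
  have hfin : ∀ c : ℝ, (∫⁻ k in Set.Icc (-π) π, F c k ∂ν) < ⊤ := fun c =>
    lemA ν (max C 0) β hβ0 hH' (le_max_right C 0) s hs0 hsβ c
  refine ENNReal.mul_lt_top ENNReal.ofReal_lt_top ?_
  exact ENNReal.add_lt_top.mpr ⟨ENNReal.add_lt_top.mpr ⟨hfin _, hfin _⟩, hfin _⟩
end
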